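/- The convex conjugate of φ(x) = 2(√x − 1)² (defined as +∞ for x < 0) is φ*(t) = 2t/(2−t) for t < 2 and φ*(t) = +∞ for t ≥ 2. -/
import Mathlib


/-- The Hellinger divergence function:
`φ(x) = 2(√x − 1)²` for `x ≥ 0`, `+∞` for `x < 0`. -/
noncomputable def phiH : ℝ → EReal := fun x =>
  if 0 ≤ x then ((2 * (Real.sqrt x - 1) ^ 2 : ℝ) : EReal) else ⊤

/-- The Fenchel–Legendre conjugate `φ*(t) = sup_x (t·x − φ(x))`. -/
noncomputable def phiHStar : ℝ → EReal := fun t =>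
  ⨆ x : ℝ, (((t * x : ℝ) : EReal) - phiH x)

theorem conjugate_of_Hellinger_divergence_function :
    ∀ t : ℝ, (t < 2 → phiHStar t = ((2 * t / (2 - t) : ℝ) : EReal)) ∧
      (2 ≤ t → phiHStar t = ⊤) := by
  intro t
  constructor
  · intro ht
    have h2 : 0 < 2 - t := by linarith
    apply le_antisymm
    · apply iSup_le
      intro x
      by_cases hx : 0 ≤ x
      · simp only [phiH, if_pos hx, ← EReal.coe_sub, EReal.coe_le_coe_iff]
        set s := Real.sqrt x with hs
        have hs0 : 0 ≤ s := Real.sqrt_nonneg x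
        have hsx : s ^ 2 = x := Real.sq_sqrt hx
        rw [le_div_iff₀ h2]
        rw [← hsx]; nlinarith [sq_nonneg ((2 - t) * s - 2)]
      · simp [phiH, if_neg hx, EReal.sub_top]
    · have hx0 : (0:ℝ) ≤ (2 / (2 - t)) ^ 2 := sq_nonneg _
      have hsqrt : Real.sqrt ((2 / (2 - t)) ^ 2) = 2 / (2 - t) :=
        Real.sqrt_sq (by positivity)
      have hval : (((t * ((2 / (2 - t)) ^ 2) : ℝ) : EReal) - phiH ((2 / (2 - t)) ^ 2))
          = ((2 * t / (2 - t) : ℝ) : EReal) := by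
        simp only [phiH, if_pos hx0, hsqrt, ← EReal.coe_sub, EReal.coe_eq_coe_iff]
        field_simp
        ring
      calc ((2 * t / (2 - t) : ℝ) : EReal)
          = (((t * ((2 / (2 - t)) ^ 2) : ℝ) : EReal) - phiH ((2 / (2 - t)) ^ 2)) :=
            hval.symm
        _ ≤ phiHStar t := le_iSup (fun x => (((t * x : ℝ) : EReal) - phiH x)) _
  · intro ht
    rw [phiHStar, iSup_eq_top]
    intro b hb
    obtain ⟨r, hbr, -⟩ := EReal.exists_between_coe_real hb
    set s : ℝ := max 0 ((r + 3) / 4) with hsdef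
    have hs0 : 0 ≤ s := le_max_left _ _
    have hsr : (r + 3) / 4 ≤ s := le_max_right _ _
    refine ⟨s ^ 2, lt_trans hbr ?_⟩
    have hx0 : (0:ℝ) ≤ s ^ 2 := sq_nonneg s
    have hsqrt : Real.sqrt (s ^ 2) = s := Real.sqrt_sq hs0
    simp only [phiH, if_pos hx0, hsqrt, ← EReal.coe_sub, EReal.coe_lt_coe_iff]
    nlinarith [sq_nonneg s, sq_nonneg (s - 1)]
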